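/- arXiv:2501.10962 — 2 statements merged into one kernel-verified Lean document; each statement's English description precedes it below -/
import Mathlib

section
/- Let P be a finite non-empty subset of the primes and H a finite subset of the non-negative integers. Then for every integer r ≥ 1 there exist sets X_P^H(r), Y_P^H(r) ∈ 𝒜_P with X_P^H(r) ⊆ N_P^H ⊆ Y_P^H(r), and such that lim_{r→∞} δ(X_P^H(r)) = lim_{r→∞} δ(Y_P^H(r)). Consequently, the natural density δ(N_P^H) exists. -/
/-!
Let `m = ∏_{p ∈ P} p` and let `E_r` be the set of `n` such that `p ^ r ∣ n + h` for some
`p ∈ P`, `h ∈ H`. Outside `E_r` every `p`-adic valuation of `n + h` is below `r`, hence determined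
by `n mod m ^ r`; so `E_r` and `X_r = N_P^H \ E_r` are `m ^ r`-periodic, which puts `X_r` and
`Y_r = X_r ∪ E_r` in `𝒜_P` and gives them densities. A union bound over the residue classes
`-h mod p ^ r` gives `δ(E_r) ≤ |H| |P| 2^(-r)`, so the densities of `X_r ⊆ N_P^H ⊆ Y_r` squeeze
together: `δ(X_r)` is Cauchy and its limit is the density of `N_P^H`.
-/

open Filter Topology
open scoped symmDiff Classical

/-- `Ω_P(n)`: number of prime factors of `n` (with multiplicity) lying in `P`. -/
noncomputable def OmegaP (P : Set ℕ) (n : ℕ) : ℕ :=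
  n.factorization.sum fun p k => if p ∈ P then k else 0

/-- `λ_P`, the completely multiplicative function equal to `-1` at primes in `P`
and `1` at all other primes. -/
noncomputable def lambdaP (P : Set ℕ) (n : ℕ) : ℝ :=
  (-1 : ℝ) ^ OmegaP P n

/-- `Λ_P^H(n) = ∏_{h ∈ H} λ_P(n + h)` (empty product is `1`). -/
noncomputable def LambdaPH (P : Set ℕ) (H : Finset ℕ) (n : ℕ) : ℝ :=
  ∏ h ∈ H, lambdaP P (n + h)

/-- `N_P^H = {n : Λ_P^H(n) = -1}`. -/
def NPH (P : Set ℕ) (H : Finset ℕ) : Set ℕ :=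
  {n : ℕ | LambdaPH P H n = -1}

/-- Number of elements of `A` in `[1, x]`. -/
noncomputable def countIn (A : Set ℕ) (x : ℕ) : ℕ :=
  ((Finset.Icc 1 x).filter (fun n => n ∈ A)).card

/-- `A ⊆ ℕ` has natural density `d`: `|A ∩ [1,x]|/x → d`. -/
def HasDensity (A : Set ℕ) (d : ℝ) : Prop :=
  Filter.Tendsto (fun x : ℕ => (countIn A x : ℝ) / x) Filter.atTop (nhds d)

/-- The Cesàro average `(1/x) ∑_{n ≤ x} Λ_P^H(n)`. -/
noncomputable def cesaroAvg (P : Set ℕ) (H : Finset ℕ) (x : ℕ) : ℝ :=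
  (∑ n ∈ Finset.Icc 1 x, LambdaPH P H n) / x

/-- A set of naturals is small if the sum of reciprocals of its elements converges. -/
def SmallSet (P : Set ℕ) : Prop :=
  Summable fun p : P => (1 : ℝ) / (p : ℝ)

/-- `C(r,s) = {n : n ≡ -r (mod s)}`. -/
def Cset (r s : ℕ) : Set ℕ :=
  {n : ℕ | (n : ℤ) ≡ -(r : ℤ) [ZMOD (s : ℤ)]}

/-- The set of `P`-smooth positive integers. -/
def SmoothP (P : Set ℕ) : Set ℕ :=
  {n : ℕ | 0 < n ∧ ∀ p : ℕ, p.Prime → p ∣ n → p ∈ P}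

/-- `𝒜_P`: all finite unions of sets from `{∅} ∪ {C(r,n) : r ∈ ℕ, n ∈ S_P}`. -/
def calA (P : Set ℕ) : Set (Set ℕ) :=
  {A : Set ℕ | ∃ F : Finset (ℕ × ℕ), (∀ q ∈ F, q.2 ∈ SmoothP P) ∧
    A = ⋃ q ∈ F, Cset q.1 q.2}

open Function

lemma countIn_mono {A B : Set ℕ} (h : A ⊆ B) (x : ℕ) : countIn A x ≤ countIn B x :=
  Finset.card_le_card (Finset.monotone_filter_right _ fun _ _ hn => h hn)

lemma countIn_mono_right (A : Set ℕ) {x y : ℕ} (hxy : x ≤ y) : countIn A x ≤ countIn A y :=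
  Finset.card_le_card (Finset.filter_subset_filter _ (Finset.Icc_subset_Icc_right hxy))

lemma countIn_div_mono {A B : Set ℕ} (h : A ⊆ B) (x : ℕ) :
    (countIn A x : ℝ) / x ≤ countIn B x / x :=
  div_le_div_of_nonneg_right (by exact_mod_cast countIn_mono h x) x.cast_nonneg

lemma HasDensity.mono {A B : Set ℕ} {a b : ℝ} (hA : HasDensity A a) (hB : HasDensity B b)
    (hAB : A ⊆ B) : a ≤ b :=
  le_of_tendsto_of_tendsto' hA hB (countIn_div_mono hAB)

lemma HasDensity.nonneg {A : Set ℕ} {a : ℝ} (hA : HasDensity A a) : 0 ≤ a :=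
  ge_of_tendsto' hA fun _ => by positivity

lemma HasDensity.le_sum {ι : Type*} {A : Set ℕ} {a : ℝ} {F : Finset ι} {B : ι → Set ℕ}
    {b : ι → ℝ} (hA : HasDensity A a) (hB : ∀ i ∈ F, HasDensity (B i) (b i))
    (hAB : A ⊆ ⋃ i ∈ F, B i) : a ≤ ∑ i ∈ F, b i := by
  refine le_of_tendsto_of_tendsto' hA (tendsto_finsetSum F hB) fun x => ?_
  have hcount : countIn A x ≤ ∑ i ∈ F, countIn (B i) x := by
    refine (Finset.card_le_card fun n hn => ?_).trans Finset.card_biUnion_le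
    obtain ⟨hnx, hnA⟩ := Finset.mem_filter.1 hn
    obtain ⟨i, hi, hnB⟩ := Set.mem_iUnion₂.1 (hAB hnA)
    exact Finset.mem_biUnion.2 ⟨i, hi, Finset.mem_filter.2 ⟨hnx, hnB⟩⟩
  rw [← Finset.sum_div]
  exact div_le_div_of_nonneg_right (by exact_mod_cast hcount) x.cast_nonneg

lemma HasDensity.union {A B : Set ℕ} {a b : ℝ} (hA : HasDensity A a) (hB : HasDensity B b)
    (hAB : Disjoint A B) : HasDensity (A ∪ B) (a + b) := by
  refine (hA.add hB).congr fun x => ?_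
  have hcount : countIn (A ∪ B) x = countIn A x + countIn B x := by
    simp only [countIn, Set.mem_union, Finset.filter_or]
    exact Finset.card_union_of_disjoint
      (Finset.disjoint_filter.2 fun _ _ hnA hnB => hAB.notMem_of_mem_left hnA hnB)
  rw [hcount, Nat.cast_add, add_div]

lemma exists_hasDensity_of_sandwich {A : Set ℕ} {X Y : ℕ → Set ℕ} {dX dY : ℕ → ℝ}
    (hX : ∀ r, HasDensity (X r) (dX r)) (hY : ∀ r, HasDensity (Y r) (dY r))
    (hXA : ∀ r, X r ⊆ A) (hAY : ∀ r, A ⊆ Y r) (hgap : Tendsto (dY - dX) atTop (𝓝 0)) :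
    ∃ L, Tendsto dX atTop (𝓝 L) ∧ Tendsto dY atTop (𝓝 L) ∧ HasDensity A L := by
  have hXY : ∀ r s, dX r ≤ dY s := fun r s => (hX r).mono (hY s) ((hXA r).trans (hAY s))
  have hCauchy : CauchySeq dX := by
    refine Metric.cauchySeq_iff'.2 fun ε hε => ?_
    obtain ⟨N, hN⟩ := Metric.tendsto_atTop.1 hgap ε hε
    refine ⟨N, fun n hn => abs_sub_lt_iff.2 ⟨?_, ?_⟩⟩
    · have := (abs_lt.1 (hN N le_rfl)).2
      simp only [Pi.sub_apply, sub_zero] at this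
      linarith [hXY n N]
    · have := (abs_lt.1 (hN n hn)).2
      simp only [Pi.sub_apply, sub_zero] at this
      linarith [hXY N n]
  obtain ⟨L, hXL⟩ := cauchySeq_tendsto_of_complete hCauchy
  have hYL : Tendsto dY atTop (𝓝 L) := by simpa using hXL.add hgap
  refine ⟨L, hXL, hYL, tendsto_order.2 ⟨fun a ha => ?_, fun b hb => ?_⟩⟩
  · obtain ⟨r, hr⟩ := ((tendsto_order.1 hXL).1 a ha).exists
    filter_upwards [(tendsto_order.1 (hX r)).1 a hr] with x hx
    exact hx.trans_le (countIn_div_mono (hXA r) x)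
  · obtain ⟨r, hr⟩ := ((tendsto_order.1 hYL).2 b hb).exists
    filter_upwards [(tendsto_order.1 (hY r)).2 b hr] with x hx
    exact (countIn_div_mono (hAY r) x).trans_lt hx

lemma countIn_add_period {S : Set ℕ} {m : ℕ} (hS : Periodic (· ∈ S) m) (x : ℕ) :
    countIn S (x + m) = countIn S x + m.count (· ∈ S) := by
  rw [← Nat.filter_Ico_card_eq_of_periodic (x + 1) m _ hS]
  simp only [countIn, ← Finset.Ico_add_one_right_eq_Icc, Finset.card_filter]
  rw [← Finset.sum_Ico_consecutive _ (by omega : 1 ≤ x + 1) (by omega : x + 1 ≤ x + m + 1),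
    add_right_comm]

lemma countIn_eq_mod_add {S : Set ℕ} {m : ℕ} (hS : Periodic (· ∈ S) m) (x : ℕ) :
    countIn S x = countIn S (x % m) + x / m * m.count (· ∈ S) := by
  conv_lhs => rw [← Nat.mod_add_div x m]
  induction x / m with
  | zero => simp
  | succ q ih => rw [Nat.mul_succ, ← add_assoc, countIn_add_period hS, ih]; ring

lemma hasDensity_of_periodic {S : Set ℕ} {m : ℕ} (hm : 0 < m) (hS : Periodic (· ∈ S) m) :
    HasDensity S (m.count (· ∈ S) / m) := by
  set c := m.count (· ∈ S)
  have hcm : countIn S m = c := by simpa [countIn] using countIn_add_period hS 0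
  have hbound : ∀ x, |(countIn S x : ℝ) - c / m * x| ≤ c := by
    intro x
    have hm' : (0 : ℝ) < m := by exact_mod_cast hm
    have hr : (countIn S (x % m) : ℝ) ≤ c := by
      exact_mod_cast hcm ▸ countIn_mono_right S (Nat.mod_lt x hm).le
    have hxm : ((x % m : ℕ) : ℝ) ≤ m := by exact_mod_cast (Nat.mod_lt x hm).le
    have hrem : c / m * ((x % m : ℕ) : ℝ) ≤ c := by
      rw [div_mul_eq_mul_div, div_le_iff₀ hm']; gcongr
    have hx : (countIn S x : ℝ) - c / m * x =
        countIn S (x % m) - c / m * ((x % m : ℕ) : ℝ) := by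
      have hxe : (x : ℝ) = (x % m : ℕ) + m * (x / m : ℕ) := by
        exact_mod_cast (Nat.mod_add_div x m).symm
      rw [countIn_eq_mod_add hS x, hxe]
      push_cast
      field_simp
      ring
    rw [hx]
    exact abs_sub_le_of_nonneg_of_le (by positivity) hr (by positivity) hrem
  rw [HasDensity, ← tendsto_sub_nhds_zero_iff]
  refine squeeze_zero_norm' ?_ (tendsto_const_div_atTop_nhds_zero_nat (c : ℝ))
  filter_upwards [eventually_gt_atTop 0] with x hx
  have hx' : (0 : ℝ) < x := by exact_mod_cast hx
  have hdiff : (countIn S x : ℝ) / x - c / m = ((countIn S x : ℝ) - c / m * x) / x := by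
    field_simp
  rw [Real.norm_eq_abs, hdiff, abs_div, abs_of_pos hx']
  exact div_le_div_of_nonneg_right (hbound x) hx'.le

lemma Function.Periodic.mem_iff_of_modEq {S : Set ℕ} {m x y : ℕ} (hS : Periodic (· ∈ S) m)
    (h : x ≡ y [MOD m]) : x ∈ S ↔ y ∈ S := by
  rw [← eq_iff_iff, ← hS.map_mod_nat x, ← hS.map_mod_nat y, show x % m = y % m from h]

lemma mem_Cset_iff_dvd {r s n : ℕ} : n ∈ Cset r s ↔ s ∣ n + r := by
  rw [Cset, Set.mem_ofPred_eq, Int.modEq_iff_dvd, ← dvd_neg, ← Int.natCast_dvd_natCast]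
  push_cast
  ring_nf

lemma mem_Cset_iff_modEq {r s v n : ℕ} (hv : s ∣ v + r) : n ∈ Cset r s ↔ n ≡ v [MOD s] := by
  have hv' : v + r ≡ 0 [MOD s] := Nat.modEq_zero_iff_dvd.2 hv
  rw [mem_Cset_iff_dvd, ← Nat.modEq_zero_iff_dvd]
  exact ⟨fun hn => Nat.ModEq.add_right_cancel' r (hn.trans hv'.symm),
    fun hn => (hn.add_right r).trans hv'⟩

lemma hasDensity_Cset (r : ℕ) {s : ℕ} (hs : 0 < s) : HasDensity (Cset r s) (1 / s) := by
  have hCset : Cset r s = {n | n ≡ (s - 1) * r [MOD s]} := by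
    ext n
    refine mem_Cset_iff_modEq ⟨r, ?_⟩
    rw [← Nat.succ_mul, Nat.succ_eq_add_one, Nat.sub_add_cancel hs]
  have hS : Periodic (· ∈ Cset r s) s := fun n => by
    rw [hCset]
    exact propext ⟨Nat.add_modEq_right.symm.trans, Nat.add_modEq_right.trans⟩
  convert hasDensity_of_periodic hs hS
  have hcount := Nat.count_modEq_card s hs ((s - 1) * r)
  simp only [Nat.div_self hs, Nat.mod_self, Nat.not_lt_zero, if_false, add_zero] at hcount
  rw [hCset]
  norm_cast
  convert hcount.symm using 2
  rfl

lemma mem_calA_of_periodic {P S : Set ℕ} {m : ℕ} (hm : m ∈ SmoothP P)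
    (hS : Periodic (· ∈ S) m) : S ∈ calA P := by
  have hCset : ∀ {c n}, c < m → (n ∈ Cset (m - c) m ↔ n ≡ c [MOD m]) := fun hc =>
    mem_Cset_iff_modEq (by rw [Nat.add_sub_cancel' hc.le])
  refine ⟨((Finset.range m).filter (· ∈ S)).image fun c => (m - c, m), ?_, ?_⟩
  · simp only [Finset.mem_image]
    rintro _ ⟨c, -, rfl⟩
    exact hm
  ext n
  simp only [Set.mem_iUnion, Finset.mem_image, Finset.mem_filter, Finset.mem_range, exists_prop]
  constructor
  · intro hn
    have hlt := Nat.mod_lt n hm.1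
    refine ⟨_, ⟨n % m, ⟨hlt, ?_⟩, rfl⟩, (hCset hlt).2 (Nat.mod_modEq n m).symm⟩
    rwa [hS.map_mod_nat]
  · rintro ⟨_, ⟨c, ⟨hcm, hcS⟩, rfl⟩, hn⟩
    exact (hS.mem_iff_of_modEq ((hCset hcm).1 hn)).2 hcS

lemma OmegaP_congr {P : Set ℕ} {a b : ℕ} (h : ∀ p ∈ P, a.factorization p = b.factorization p) :
    OmegaP P a = OmegaP P b := by
  unfold OmegaP
  rw [Finsupp.sum_of_support_subset _ Finset.subset_union_left _ (by simp),
    Finsupp.sum_of_support_subset _ Finset.subset_union_right _ (by simp)]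
  refine Finset.sum_congr rfl fun p _ => ?_
  split_ifs with hp
  exacts [h p hp, rfl]

lemma Nat.factorization_le_of_modEq {p r a b : ℕ} (hp : p.Prime) (hab : a ≡ b [MOD p ^ r])
    (ha : ¬ p ^ r ∣ a) (hb : b ≠ 0) : a.factorization p ≤ b.factorization p := by
  have ha0 : a ≠ 0 := by rintro rfl; exact ha (dvd_zero _)
  have hlt : a.factorization p ≤ r := by
    by_contra! h
    exact ha ((hp.pow_dvd_iff_le_factorization ha0).2 h.le)
  rw [← hp.pow_dvd_iff_le_factorization hb]
  exact (hab.dvd_iff (pow_dvd_pow p hlt)).1 (Nat.ordProj_dvd a p)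

lemma Nat.factorization_eq_of_modEq {p r a b : ℕ} (hp : p.Prime) (hab : a ≡ b [MOD p ^ r])
    (ha : ¬ p ^ r ∣ a) (hb : ¬ p ^ r ∣ b) : a.factorization p = b.factorization p :=
  (factorization_le_of_modEq hp hab ha (by rintro rfl; exact hb (dvd_zero _))).antisymm
    (factorization_le_of_modEq hp hab.symm hb (by rintro rfl; exact ha (dvd_zero _)))

def exceptionalSet (P : Set ℕ) (H : Finset ℕ) (r : ℕ) : Set ℕ :=
  {n | ∃ h ∈ H, ∃ p ∈ P, p ^ r ∣ n + h}

section Exceptional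

variable {P : Set ℕ} {H : Finset ℕ} {r m : ℕ}

lemma periodic_exceptionalSet (hm : ∀ p ∈ P, p ^ r ∣ m) :
    Periodic (· ∈ exceptionalSet P H r) m := fun n => by
  simp only [exceptionalSet, Set.mem_ofPred_eq, add_right_comm n m]
  exact propext <| exists_congr fun h => and_congr_right fun _ =>
    exists_congr fun p => and_congr_right fun hp => Nat.dvd_add_left (hm p hp)

lemma LambdaPH_add_of_notMem_exceptionalSet (hP : ∀ q ∈ P, q.Prime) (hm : ∀ p ∈ P, p ^ r ∣ m)
    {n : ℕ} (hn : n ∉ exceptionalSet P H r) : LambdaPH P H (n + m) = LambdaPH P H n := by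
  refine Finset.prod_congr rfl fun h hh => congrArg ((-1 : ℝ) ^ ·) (OmegaP_congr fun p hp => ?_)
  have hmod : n + m + h ≡ n + h [MOD p ^ r] := by
    rw [add_right_comm]
    simpa using (Nat.modEq_zero_iff_dvd.2 (hm p hp)).add_left (n + h)
  have hnd : ¬ p ^ r ∣ n + h := fun hd => hn ⟨h, hh, p, hp, hd⟩
  exact Nat.factorization_eq_of_modEq (hP p hp) hmod ((hmod.dvd_iff dvd_rfl).not.2 hnd) hnd

lemma periodic_NPH_sdiff_exceptionalSet (hP : ∀ q ∈ P, q.Prime) (hm : ∀ p ∈ P, p ^ r ∣ m) :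
    Periodic (· ∈ NPH P H \ exceptionalSet P H r) m := fun n => by
  have hE : (n + m ∈ exceptionalSet P H r) = (n ∈ exceptionalSet P H r) :=
    periodic_exceptionalSet hm n
  by_cases hn : n ∈ exceptionalSet P H r
  · simp [hE, hn]
  · simp only [Set.mem_sdiff, hE, NPH, Set.mem_ofPred_eq,
      LambdaPH_add_of_notMem_exceptionalSet hP hm hn]

lemma HasDensity.exceptionalSet_le (hP : ∀ q ∈ P, q.Prime) (hfin : P.Finite) {d : ℝ}
    (hd : HasDensity (exceptionalSet P H r) d) :
    d ≤ H.card * hfin.toFinset.card * (1 / 2) ^ r := by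
  have hprime : ∀ q ∈ H ×ˢ hfin.toFinset, q.2.Prime := fun q hq =>
    hP q.2 (hfin.mem_toFinset.1 (Finset.mem_product.1 hq).2)
  have hle := hd.le_sum (F := H ×ˢ hfin.toFinset) (B := fun q => Cset q.1 (q.2 ^ r))
    (fun q hq => hasDensity_Cset q.1 (pow_pos (hprime q hq).pos r))
    fun n ⟨h, hh, p, hp, hdvd⟩ => Set.mem_biUnion (x := (h, p))
      (Finset.mem_product.2 ⟨hh, hfin.mem_toFinset.2 hp⟩) (mem_Cset_iff_dvd.2 hdvd)
  refine hle.trans ((Finset.sum_le_card_nsmul _ _ ((1 / 2) ^ r) fun q hq => ?_).trans_eq ?_)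
  · rw [Nat.cast_pow, one_div_pow]
    gcongr
    exact_mod_cast (hprime q hq).two_le
  · rw [nsmul_eq_mul, Finset.card_product]
    push_cast
    ring

end Exceptional

lemma prod_pow_mem_smoothP {s : Finset ℕ} (hs : ∀ p ∈ s, p.Prime) (r : ℕ) :
    (∏ p ∈ s, p) ^ r ∈ SmoothP s := by
  refine ⟨pow_pos (Finset.prod_pos fun p hp => (hs p hp).pos) r, fun q hq hqd => ?_⟩
  obtain ⟨p, hp, hqp⟩ := (Prime.dvd_finsetProd_iff hq.prime _).1 (hq.dvd_of_dvd_pow hqd)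
  rwa [(Nat.prime_dvd_prime_iff_eq hq (hs p hp)).1 hqp]

theorem stmt_12_general (P : Set ℕ) (hP : ∀ q ∈ P, Nat.Prime q) (hfin : P.Finite)
    (H : Finset ℕ) :
    ∃ (X Y : ℕ → Set ℕ) (dX dY : ℕ → ℝ) (L : ℝ),
      (∀ r : ℕ, 1 ≤ r →
        X r ∈ calA P ∧ Y r ∈ calA P ∧
        X r ⊆ NPH P H ∧ NPH P H ⊆ Y r ∧
        HasDensity (X r) (dX r) ∧ HasDensity (Y r) (dY r)) ∧
      Filter.Tendsto dX Filter.atTop (nhds L) ∧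
      Filter.Tendsto dY Filter.atTop (nhds L) ∧
      HasDensity (NPH P H) L := by
  set M : ℕ → ℕ := fun r => (∏ p ∈ hfin.toFinset, p) ^ r
  have hsmooth r : M r ∈ SmoothP P := by
    simpa using prod_pow_mem_smoothP (s := hfin.toFinset) (by simpa using hP) r
  have hdvd r : ∀ p ∈ P, p ^ r ∣ M r := fun p hp =>
    pow_dvd_pow_of_dvd (Finset.dvd_prod_of_mem _ (hfin.mem_toFinset.2 hp)) r
  set E := exceptionalSet P H
  set X : ℕ → Set ℕ := fun r => NPH P H \ E r
  have hE r : Periodic (· ∈ E r) (M r) := periodic_exceptionalSet (hdvd r)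
  have hX r : Periodic (· ∈ X r) (M r) := periodic_NPH_sdiff_exceptionalSet hP (hdvd r)
  have hdE r := hasDensity_of_periodic (hsmooth r).1 (hE r)
  have hdX r := hasDensity_of_periodic (hsmooth r).1 (hX r)
  have hdY r := (hdX r).union (hdE r) Set.disjoint_sdiff_left
  have hgap : Tendsto (fun r => ((M r).count (· ∈ E r) : ℝ) / M r) atTop (𝓝 0) := by
    refine squeeze_zero (fun r => (hdE r).nonneg) (fun r => (hdE r).exceptionalSet_le hP hfin) ?_
    simpa using (tendsto_pow_atTop_nhds_zero_of_lt_one (by norm_num : (0 : ℝ) ≤ 1 / 2)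
      (by norm_num)).const_mul ((H.card : ℝ) * hfin.toFinset.card)
  obtain ⟨L, hXL, hYL, hNL⟩ := exists_hasDensity_of_sandwich hdX hdY
    (fun r => Set.sdiff_subset) (fun r => Set.subset_sdiff_union _ _)
    (hgap.congr fun r => (add_sub_cancel_left _ _).symm)
  refine ⟨X, fun r => X r ∪ E r, _, _, L, fun r _ => ⟨mem_calA_of_periodic (hsmooth r) (hX r),
    mem_calA_of_periodic (hsmooth r) ?_, Set.sdiff_subset, Set.subset_sdiff_union _ _,
    hdX r, hdY r⟩, hXL, hYL, hNL⟩
  intro n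
  simp only [Set.mem_union, hX r n, hE r n]

/-- For a finite non-empty set `P` of primes and finite `H`, there are
approximating sets `X_P^H(r) ⊆ N_P^H ⊆ Y_P^H(r)` in `𝒜_P` whose densities converge to a
common limit; consequently `δ(N_P^H)` exists (and equals that limit). -/
theorem stmt_12 (P : Set ℕ) (hP : ∀ q ∈ P, Nat.Prime q) (hfin : P.Finite)
    (hne : P.Nonempty) (H : Finset ℕ) :
    ∃ (X Y : ℕ → Set ℕ) (dX dY : ℕ → ℝ) (L : ℝ),
      (∀ r : ℕ, 1 ≤ r →
        X r ∈ calA P ∧ Y r ∈ calA P ∧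
        X r ⊆ NPH P H ∧ NPH P H ⊆ Y r ∧
        HasDensity (X r) (dX r) ∧ HasDensity (Y r) (dY r)) ∧
      Filter.Tendsto dX Filter.atTop (nhds L) ∧
      Filter.Tendsto dY Filter.atTop (nhds L) ∧
      HasDensity (NPH P H) L :=
  stmt_12_general P hP hfin H
end

section
/- Let P be a set of primes and H₁, H₂ finite sets of non-negative integers. Suppose the limits κ_P^{H₁} and κ_P^{H₂} both exist and |κ_P^{H₁}| = |κ_P^{H₂}| = 1. Then κ_P^{H₁ △ H₂} exists and κ_P^{H₁ △ H₂} = κ_P^{H₁} · κ_P^{H₂}. -/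
/-!
Since `λ_P² = 1`, we have `Λ_P^{H₁ △ H₂} = Λ_P^{H₁} Λ_P^{H₂}`. As `|Λ_P^{H₂}| ≤ 1` and
`κ₂ = ±1`, the defect `|Λ_P^{H₂}(n) - κ₂| = 1 - κ₂ Λ_P^{H₂}(n)` is nonnegative with mean tending to
`1 - κ₂² = 0`, so replacing `Λ_P^{H₂}(n)` by the constant `κ₂` changes the mean of
`Λ_P^{H₁} Λ_P^{H₂}` by `o(1)`.
-/

open Filter Topology
open scoped symmDiff Classical

open Finset

theorem Finset.prod_symmDiff_of_mul_self_eq_one {α M : Type*} [DecidableEq α] [CommMonoid M]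
    {f : α → M} (hf : ∀ a, f a * f a = 1) (s t : Finset α) :
    ∏ a ∈ s ∆ t, f a = (∏ a ∈ s, f a) * ∏ a ∈ t, f a := by
  have hsub : s ∩ t ⊆ s ∪ t := inter_subset_left.trans subset_union_left
  rw [← prod_union_inter, ← prod_sdiff hsub, mul_assoc, ← prod_mul_distrib,
    prod_congr rfl fun a _ => hf a, prod_const_one, mul_one, symmDiff_eq_sup_sdiff_inf]
  rfl

lemma abs_sub_eq_one_sub_mul {c t : ℝ} (hc : |c| = 1) (ht : |t| ≤ 1) :
    |t - c| = 1 - c * t := by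
  rcases abs_le.mp ht with ⟨ht₁, ht₂⟩
  rcases (abs_eq zero_le_one).mp hc with rfl | rfl
  · rw [abs_of_nonpos (by linarith)]; ring
  · rw [abs_of_nonneg (by linarith)]; ring

noncomputable def cesaroMean (f : ℕ → ℝ) (x : ℕ) : ℝ :=
  (∑ n ∈ Icc 1 x, f n) / x

lemma cesaroMean_add (f g : ℕ → ℝ) (x : ℕ) :
    cesaroMean (fun n => f n + g n) x = cesaroMean f x + cesaroMean g x := by
  simp only [cesaroMean, sum_add_distrib, add_div]

lemma cesaroMean_const_mul (c : ℝ) (f : ℕ → ℝ) (x : ℕ) :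
    cesaroMean (fun n => c * f n) x = c * cesaroMean f x := by
  simp only [cesaroMean, ← mul_sum, mul_div_assoc]

lemma cesaroMean_const {x : ℕ} (hx : x ≠ 0) (c : ℝ) : cesaroMean (fun _ => c) x = c := by
  have : (x : ℝ) ≠ 0 := Nat.cast_ne_zero.mpr hx
  simp [cesaroMean, field]

lemma abs_cesaroMean_le {f g : ℕ → ℝ} (h : ∀ n, |f n| ≤ g n) (x : ℕ) :
    |cesaroMean f x| ≤ cesaroMean g x := by
  rw [cesaroMean, cesaroMean, abs_div, Nat.abs_cast]
  gcongr
  exact (abs_sum_le_sum_abs _ _).trans (sum_le_sum fun n _ => h n)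

lemma tendsto_cesaroMean_abs_sub_of_abs_eq_one {g : ℕ → ℝ} {c : ℝ} (hg : ∀ n, |g n| ≤ 1)
    (hc : |c| = 1) (h : Tendsto (cesaroMean g) atTop (𝓝 c)) :
    Tendsto (cesaroMean fun n => |g n - c|) atTop (𝓝 0) := by
  have hcc : 1 - c * c = 0 := by nlinarith [sq_abs c]
  have hlim : Tendsto (fun x => 1 - c * cesaroMean g x) atTop (𝓝 0) := by
    rw [← hcc]
    exact tendsto_const_nhds.sub (h.const_mul c)
  refine hlim.congr' ?_
  filter_upwards [eventually_ne_atTop 0] with x hx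
  calc 1 - c * cesaroMean g x = cesaroMean (fun n => 1 + -c * g n) x := by
        rw [cesaroMean_add, cesaroMean_const hx, cesaroMean_const_mul]; ring
    _ = cesaroMean (fun n => |g n - c|) x := by
        congr 1
        funext n
        rw [abs_sub_eq_one_sub_mul hc (hg n)]
        ring

lemma tendsto_cesaroMean_mul {a g : ℕ → ℝ} {κ c : ℝ} (ha : ∀ n, |a n| ≤ 1)
    (hmean : Tendsto (cesaroMean a) atTop (𝓝 κ))
    (hclose : Tendsto (cesaroMean fun n => |g n - c|) atTop (𝓝 0)) :
    Tendsto (cesaroMean fun n => a n * g n) atTop (𝓝 (κ * c)) := by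
  have herr : Tendsto (cesaroMean fun n => a n * (g n - c)) atTop (𝓝 0) := by
    refine squeeze_zero_norm (fun x => abs_cesaroMean_le (fun n => ?_) x) hclose
    rw [abs_mul]
    exact mul_le_of_le_one_left (abs_nonneg _) (ha n)
  have hsplit : (cesaroMean fun n => a n * g n) =
      fun x => c * cesaroMean a x + cesaroMean (fun n => a n * (g n - c)) x := by
    funext x
    rw [← cesaroMean_const_mul, ← cesaroMean_add]
    congr 1
    funext n
    ring
  rw [hsplit, mul_comm κ, ← add_zero (c * κ)]
  exact (hmean.const_mul c).add herr

lemma lambdaP_mul_self (P : Set ℕ) (n : ℕ) : lambdaP P n * lambdaP P n = 1 := by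
  rw [lambdaP, ← mul_pow]
  norm_num

lemma abs_LambdaPH (P : Set ℕ) (H : Finset ℕ) (n : ℕ) : |LambdaPH P H n| = 1 := by
  simp [LambdaPH, lambdaP, abs_prod, abs_pow]

lemma LambdaPH_symmDiff (P : Set ℕ) (H₁ H₂ : Finset ℕ) (n : ℕ) :
    LambdaPH P (H₁ ∆ H₂) n = LambdaPH P H₁ n * LambdaPH P H₂ n :=
  prod_symmDiff_of_mul_self_eq_one (fun h => lambdaP_mul_self P (n + h)) H₁ H₂

lemma cesaroAvg_eq_cesaroMean (P : Set ℕ) (H : Finset ℕ) :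
    cesaroAvg P H = cesaroMean (LambdaPH P H) := rfl

theorem stmt_16_general (P : Set ℕ) (H₁ H₂ : Finset ℕ)
    (κ₁ κ₂ : ℝ)
    (h₁ : Filter.Tendsto (cesaroAvg P H₁) Filter.atTop (nhds κ₁))
    (h₂ : Filter.Tendsto (cesaroAvg P H₂) Filter.atTop (nhds κ₂))
    (ha₂ : |κ₂| = 1) :
    Filter.Tendsto (cesaroAvg P (H₁ ∆ H₂)) Filter.atTop (nhds (κ₁ * κ₂)) := by
  have hbound : ∀ H n, |LambdaPH P H n| ≤ 1 := fun H n => (abs_LambdaPH P H n).le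
  rw [cesaroAvg_eq_cesaroMean] at h₁ h₂ ⊢
  rw [show LambdaPH P (H₁ ∆ H₂) = _ from funext (LambdaPH_symmDiff P H₁ H₂)]
  exact tendsto_cesaroMean_mul (hbound H₁) h₁
    (tendsto_cesaroMean_abs_sub_of_abs_eq_one (hbound H₂) ha₂ h₂)

/-- If `κ_P^{H₁}` and `κ_P^{H₂}` exist with `|κ_P^{H₁}| = |κ_P^{H₂}| = 1`,
then `κ_P^{H₁ ∆ H₂}` exists and equals `κ_P^{H₁} · κ_P^{H₂}`. -/
theorem stmt_16 (P : Set ℕ) (hP : ∀ q ∈ P, Nat.Prime q) (H₁ H₂ : Finset ℕ)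
    (κ₁ κ₂ : ℝ)
    (h₁ : Filter.Tendsto (cesaroAvg P H₁) Filter.atTop (nhds κ₁))
    (h₂ : Filter.Tendsto (cesaroAvg P H₂) Filter.atTop (nhds κ₂))
    (ha₁ : |κ₁| = 1) (ha₂ : |κ₂| = 1) :
    Filter.Tendsto (cesaroAvg P (H₁ ∆ H₂)) Filter.atTop (nhds (κ₁ * κ₂)) :=
  stmt_16_general P H₁ H₂ κ₁ κ₂ h₁ h₂ ha₂
end
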